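/- arXiv:0707.3603 — 4 statements merged into one kernel-verified Lean document; each statement's English description precedes it below -/
import Mathlib

section
/- In the Hecke algebra of a dihedral Coxeter system generated by $s, r$ with $m(s,r) = m < \infty$, define $Z_0 = 1$, $Z_{2k} = T_r T_s T_r \cdots$ ($k$ factors starting with $T_r$), and $Z_{2k-1} = T_s T_r T_s \cdots$ ($k$ factors starting with $T_s$). Then for every $n \geq 1$, the alternating product $(1+T_s)(1+T_r)(1+T_s)\cdots$ with $2n$ factors equals $\sum_{j=0}^{4n-1} p_{j,n} Z_j$ where each $p_{j,n} \in \mathbb{Z}[q]$ has degree strictly less than $n - \lfloor j/4 \rfloor$, and $p_{4n-1,n} = 1$. -/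
/-! With `g = (1 + T_s)(1 + T_r)` the product is `g ^ n`. Multiplying a word `Z_k` on the right
by `g` uses the quadratic relation at most twice: `Z_k g` is a combination of four words `Z_l`
with `l ≤ k + 4` and monomial coefficients of degree at most `1 + ⌊k/4⌋ - ⌊l/4⌋`. So the
`ℤ`-span of the `p • Z_j` with `j < 4n - 1` and `deg p < n - ⌊j/4⌋` is mapped by `g` into the
next one, while `Z_{4n-1} g = Z_{4n+3} + q Z_{4n-3} + q Z_{4n-1} + Z_{4n+1}`. Induction on `n`
puts `g ^ n - Z_{4n-1}` in that span. -/

open LaurentPolynomial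

/-- The alternating products `Z_j` in the Hecke algebra of a dihedral system:
`Z 0 = 1`, `Z (2k) = T_r T_s T_r ⋯` (`k` factors starting with `T_r`),
`Z (2k-1) = T_s T_r T_s ⋯` (`k` factors starting with `T_s`). -/
noncomputable def Zel {H : Type*} [Monoid H] (Ts Tr : H) : ℕ → H := fun j =>
  if Odd j then (((List.range ((j + 1) / 2)).map (fun i => if Even i then Ts else Tr)).prod)
  else (((List.range (j / 2)).map (fun i => if Even i then Tr else Ts)).prod)

open Polynomial

lemma List.prod_range_map_ite_even_eq_pow {M : Type*} [Monoid M] (x y : M) (n : ℕ) :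
    ((List.range (2 * n)).map fun k => if Even k then x else y).prod = (x * y) ^ n := by
  induction n with
  | zero => simp
  | succ n ih =>
    rw [show 2 * (n + 1) = 2 * n + 1 + 1 by ring, List.range_succ, List.range_succ]
    simp [ih, pow_succ, parity_simps]

section Monoid
variable {H : Type*} [Monoid H] (a b : H)

lemma Zel_two_mul (k : ℕ) :
    Zel a b (2 * k) = ((List.range k).map fun i => if Even i then b else a).prod := by
  simp [Zel]

lemma Zel_two_mul_add_one (k : ℕ) :
    Zel a b (2 * k + 1) = ((List.range (k + 1)).map fun i => if Even i then a else b).prod := by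
  simp [Zel, show (2 * k + 1 + 1) / 2 = k + 1 by omega]

@[simp] lemma Zel_zero : Zel a b 0 = 1 := Zel_two_mul a b 0

@[simp] lemma Zel_one : Zel a b 1 = a := by simpa using Zel_two_mul_add_one a b 0

lemma Zel_add_two (j : ℕ) : Zel a b (j + 2) = Zel a b j * if j % 4 < 2 then b else a := by
  rcases Nat.even_or_odd' j with ⟨k, rfl | rfl⟩
  · have hk : Even k ↔ 2 * k % 4 < 2 := by rw [Nat.even_iff]; omega
    rw [show 2 * k + 2 = 2 * (k + 1) by ring, Zel_two_mul, Zel_two_mul, List.range_succ]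
    simp [hk]
  · have hk : Even (k + 1) ↔ ¬ (2 * k + 1) % 4 < 2 := by rw [Nat.even_iff]; omega
    rw [show 2 * k + 1 + 2 = 2 * (k + 1) + 1 by ring, Zel_two_mul_add_one, Zel_two_mul_add_one,
      List.range_succ (n := k + 1)]
    simp only [List.map_append, List.map_singleton, List.prod_append, List.prod_singleton, hk,
      ite_not]

lemma Zel_add_two_of_mod_lt {j : ℕ} (h : j % 4 < 2) : Zel a b (j + 2) = Zel a b j * b := by
  rw [Zel_add_two, if_pos h]

lemma Zel_add_two_of_le_mod {j : ℕ} (h : 2 ≤ j % 4) : Zel a b (j + 2) = Zel a b j * a := by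
  rw [Zel_add_two, if_neg h.not_gt]

end Monoid

section Quadratic
variable {R H : Type*} [CommRing R] [Ring H] [Algebra R H] {a b : H} {q : R}

lemma mul_mul_of_quadratic {s : H} (hs : s * s = q • 1 + (q - 1) • s) (y : H) :
    y * s * s = q • y + (q - 1) • (y * s) := by
  rw [mul_assoc, hs, mul_add, mul_smul_comm, mul_smul_comm, mul_one]

lemma mul_one_add_mul_one_add (x : H) :
    x * ((1 + a) * (1 + b)) = x + x * a + x * b + x * a * b := by
  noncomm_ring

lemma Zel_zero_mul : Zel a b 0 * ((1 + a) * (1 + b)) =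
    Zel a b 0 + Zel a b 1 + Zel a b 2 + Zel a b 3 := by
  rw [Zel_add_two_of_mod_lt a b (j := 1) (by norm_num),
    Zel_add_two_of_mod_lt a b (j := 0) (by norm_num), mul_one_add_mul_one_add]
  simp only [Zel_zero, Zel_one, one_mul]

lemma Zel_one_mul (ha : a * a = q • 1 + (q - 1) • a) : Zel a b 1 * ((1 + a) * (1 + b)) =
    q • (Zel a b 0 + Zel a b 1 + Zel a b 2 + Zel a b 3) := by
  rw [Zel_add_two_of_mod_lt a b (j := 1) (by norm_num),
    Zel_add_two_of_mod_lt a b (j := 0) (by norm_num), mul_one_add_mul_one_add]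
  simp only [Zel_zero, Zel_one, one_mul, ha, add_mul, smul_mul_assoc]
  module

lemma Zel_add_two_mul (hb : b * b = q • 1 + (q - 1) • b) {j : ℕ} (hj : j % 4 < 2) :
    Zel a b (j + 2) * ((1 + a) * (1 + b)) =
      q • Zel a b j + q • Zel a b (j + 2) + Zel a b (j + 4) + Zel a b (j + 6) := by
  rw [Zel_add_two_of_mod_lt a b (j := j + 4) (by omega),
    Zel_add_two_of_le_mod a b (j := j + 2) (by omega), Zel_add_two_of_mod_lt a b hj,
    mul_one_add_mul_one_add, mul_mul_of_quadratic hb]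
  module

lemma Zel_add_four_mul (ha : a * a = q • 1 + (q - 1) • a) (hb : b * b = q • 1 + (q - 1) • b)
    {j : ℕ} (hj : j % 4 < 2) :
    Zel a b (j + 4) * ((1 + a) * (1 + b)) =
      q ^ 2 • Zel a b j + q ^ 2 • Zel a b (j + 2) + q • Zel a b (j + 4) + q • Zel a b (j + 6) := by
  rw [Zel_add_two_of_mod_lt a b (j := j + 4) (by omega),
    Zel_add_two_of_le_mod a b (j := j + 2) (by omega), Zel_add_two_of_mod_lt a b hj,
    mul_one_add_mul_one_add, mul_mul_of_quadratic ha, add_mul, smul_mul_assoc, smul_mul_assoc,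
    mul_mul_of_quadratic hb]
  module

end Quadratic

lemma degree_mul_lt_add {R : Type*} [Semiring R] {p r : R[X]} {N e : ℕ} (hp : p.degree < N)
    (hr : r.degree ≤ e) : (p * r).degree < ↑(N + e) := by
  rcases eq_or_ne r 0 with rfl | hr0
  · simp
  refine (degree_mul_le p r).trans_lt ?_
  push_cast
  exact WithBot.add_lt_add_of_lt_of_le (degree_ne_bot.2 hr0) hp hr

section Filtration
variable {H : Type*} [Ring H] [Algebra ℤ[T;T⁻¹] H] (a b : H)

/-- The leading word `Z (4n-1)` is left out, so that its coefficient can be pinned to `1`. -/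
def zelFiltration (n : ℕ) : Submodule ℤ H :=
  Submodule.span ℤ
    {x | ∃ j < 4 * n - 1, ∃ p : ℤ[X], p.degree < ↑(n - j / 4) ∧ x = toLaurent p • Zel a b j}

variable {a b}

local notation "q" => (T 1 : ℤ[T;T⁻¹])

lemma smul_Zel_mem_zelFiltration {n j N : ℕ} {p : ℤ[X]} (hj : j < 4 * n - 1) (hp : p.degree < N)
    (hN : N ≤ n - j / 4) : toLaurent p • Zel a b j ∈ zelFiltration a b n :=
  Submodule.subset_span ⟨j, hj, p, hp.trans_le (by exact_mod_cast hN), rfl⟩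

lemma exists_sum_of_mem_zelFiltration {n : ℕ} {x : H} (hx : x ∈ zelFiltration a b n) :
    ∃ p : ℕ → ℤ[X], (∀ j, (p j).degree < ↑(n - j / 4)) ∧
      x = ∑ j ∈ Finset.range (4 * n - 1), toLaurent (p j) • Zel a b j := by
  induction hx using Submodule.span_induction with
  | mem x hx =>
    obtain ⟨j, hj, p, hp, rfl⟩ := hx
    refine ⟨Pi.single j p, fun k => ?_, ?_⟩
    · rcases eq_or_ne k j with rfl | hk
      · simpa using hp
      · simp [hk]
    · rw [Finset.sum_eq_single_of_mem j (Finset.mem_range.2 hj) fun k _ hk => by simp [hk]]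
      simp
  | zero => exact ⟨0, fun j => by simp, by simp⟩
  | add x y _ _ hx hy =>
    obtain ⟨p, hp, rfl⟩ := hx
    obtain ⟨r, hr, rfl⟩ := hy
    exact ⟨p + r, fun j => (degree_add_le _ _).trans_lt (max_lt (hp j) (hr j)),
      by simp only [Pi.add_apply, map_add, add_smul, Finset.sum_add_distrib]⟩
  | smul c x _ hx =>
    obtain ⟨p, hp, rfl⟩ := hx
    exact ⟨c • p, fun j => (degree_smul_le _ _).trans_lt (hp j),
      by simp only [Finset.smul_sum, Pi.smul_apply, map_zsmul, smul_assoc]⟩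

lemma Zel_mem_zelFiltration {n j : ℕ} (hj : j < 4 * n - 1) : Zel a b j ∈ zelFiltration a b n := by
  simpa using smul_Zel_mem_zelFiltration (a := a) (b := b) (p := 1) (N := 1) hj (by simp)
    (by omega)

lemma smul_Zel_mul_mem_zelFiltration (ha : a * a = q • 1 + (q - 1) • a)
    (hb : b * b = q • 1 + (q - 1) • b) {n j : ℕ} {p : ℤ[X]} (hj : j < 4 * n - 1)
    (hp : p.degree < ↑(n - j / 4)) :
    toLaurent p • Zel a b j * ((1 + a) * (1 + b)) ∈ zelFiltration a b (n + 1) := by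
  have hpX := degree_mul_lt_add (e := 1) hp degree_X_le
  have hpX2 := degree_mul_lt_add hp (degree_X_pow_le 2)
  obtain rfl | rfl | ⟨i, hi, rfl | rfl⟩ :
      j = 0 ∨ j = 1 ∨ ∃ i, i % 4 < 2 ∧ (j = i + 2 ∨ j = i + 4) := by
    rcases lt_or_ge j 2 with h | h
    · omega
    by_cases h4 : 2 ≤ j % 4
    · exact .inr <| .inr ⟨j - 2, by omega, .inl (by omega)⟩
    · exact .inr <| .inr ⟨j - 4, by omega, .inr (by omega)⟩
  · rw [smul_mul_assoc, Zel_zero_mul]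
    simp only [smul_add]
    refine add_mem (add_mem (add_mem ?_ ?_) ?_) ?_ <;>
      exact smul_Zel_mem_zelFiltration (by omega) hp (by omega)
  · rw [smul_mul_assoc, Zel_one_mul ha, smul_smul, ← toLaurent_X, ← map_mul]
    simp only [smul_add]
    refine add_mem (add_mem (add_mem ?_ ?_) ?_) ?_ <;>
      exact smul_Zel_mem_zelFiltration (by omega) hpX (by omega)
  · rw [smul_mul_assoc, Zel_add_two_mul hb hi]
    simp only [smul_add, smul_smul, ← toLaurent_X, ← map_mul]
    refine add_mem (add_mem (add_mem ?_ ?_) ?_) ?_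
    · exact smul_Zel_mem_zelFiltration (by omega) hpX (by omega)
    · exact smul_Zel_mem_zelFiltration (by omega) hpX (by omega)
    · exact smul_Zel_mem_zelFiltration (by omega) hp (by omega)
    · exact smul_Zel_mem_zelFiltration (by omega) hp (by omega)
  · rw [smul_mul_assoc, Zel_add_four_mul ha hb hi]
    simp only [smul_add, smul_smul, ← toLaurent_X, ← map_pow, ← map_mul]
    refine add_mem (add_mem (add_mem ?_ ?_) ?_) ?_
    · exact smul_Zel_mem_zelFiltration (by omega) hpX2 (by omega)
    · exact smul_Zel_mem_zelFiltration (by omega) hpX2 (by omega)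
    · exact smul_Zel_mem_zelFiltration (by omega) hpX (by omega)
    · exact smul_Zel_mem_zelFiltration (by omega) hpX (by omega)

lemma mul_mem_zelFiltration (ha : a * a = q • 1 + (q - 1) • a)
    (hb : b * b = q • 1 + (q - 1) • b) {n : ℕ} {x : H} (hx : x ∈ zelFiltration a b n) :
    x * ((1 + a) * (1 + b)) ∈ zelFiltration a b (n + 1) := by
  induction hx using Submodule.span_induction with
  | mem x hx =>
    obtain ⟨j, hj, p, hp, rfl⟩ := hx
    exact smul_Zel_mul_mem_zelFiltration ha hb hj hp
  | zero => simp
  | add x y _ _ hx hy => simpa only [add_mul] using add_mem hx hy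
  | smul c x _ hx => simpa only [smul_mul_assoc] using Submodule.smul_mem _ c hx

lemma pow_sub_Zel_mem_zelFiltration (ha : a * a = q • 1 + (q - 1) • a)
    (hb : b * b = q • 1 + (q - 1) • b) (n : ℕ) :
    ((1 + a) * (1 + b)) ^ (n + 1) - Zel a b (4 * n + 3) ∈ zelFiltration a b (n + 1) := by
  induction n with
  | zero =>
    have h : (1 + a) * (1 + b) = Zel a b 0 + Zel a b 1 + Zel a b 2 + Zel a b 3 := by
      rw [← Zel_zero_mul, Zel_zero, one_mul]
    rw [zero_add, pow_one, h, add_sub_cancel_right]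
    refine add_mem (add_mem ?_ ?_) ?_ <;> exact Zel_mem_zelFiltration (by omega)
  | succ n ih =>
    have h := Zel_add_two_mul (a := a) hb (j := 4 * n + 1) (by omega)
    have key : ((1 + a) * (1 + b)) ^ (n + 2) - Zel a b (4 * (n + 1) + 3) =
        (((1 + a) * (1 + b)) ^ (n + 1) - Zel a b (4 * n + 3)) * ((1 + a) * (1 + b)) +
          (q • Zel a b (4 * n + 1) + q • Zel a b (4 * n + 3) + Zel a b (4 * n + 5)) := by
      rw [sub_mul, ← pow_succ, h]
      abel
    rw [key, ← toLaurent_X]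
    refine add_mem (mul_mem_zelFiltration ha hb ih) (add_mem (add_mem ?_ ?_) ?_)
    · exact smul_Zel_mem_zelFiltration (N := 2) (by omega) (by simp) (by omega)
    · exact smul_Zel_mem_zelFiltration (N := 2) (by omega) (by simp) (by omega)
    · exact Zel_mem_zelFiltration (by omega)

theorem exists_pow_eq_sum_smul_Zel (ha : a * a = q • 1 + (q - 1) • a)
    (hb : b * b = q • 1 + (q - 1) • b) {n : ℕ} (hn : 1 ≤ n) :
    ∃ p : ℕ → ℤ[X],
      ((1 + a) * (1 + b)) ^ n = ∑ k ∈ Finset.range (4 * n), toLaurent (p k) • Zel a b k ∧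
      (∀ k < 4 * n, (p k).degree < ↑(n - k / 4)) ∧ p (4 * n - 1) = 1 := by
  obtain ⟨n, rfl⟩ := Nat.exists_eq_add_of_le' hn
  obtain ⟨p, hp, hsum⟩ := exists_sum_of_mem_zelFiltration (pow_sub_Zel_mem_zelFiltration ha hb n)
  have htop : 4 * (n + 1) - 1 = 4 * n + 3 := by omega
  rw [htop] at hsum
  refine ⟨Function.update p (4 * n + 3) 1, ?_, fun k _ => ?_, by simp [htop]⟩
  · rw [show 4 * (n + 1) = 4 * n + 3 + 1 by ring, Finset.sum_range_succ, Function.update_self,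
      map_one, one_smul, ← sub_eq_iff_eq_add, hsum]
    refine Finset.sum_congr rfl fun k hk => ?_
    rw [Function.update_of_ne (by simp at hk; omega)]
  · rcases eq_or_ne k (4 * n + 3) with rfl | hk
    · simp [show (4 * n + 3) / 4 = n by omega]
    · simpa [hk] using hp k

end Filtration

theorem stmt2_general
    (B W : Type) [Group W] (M : CoxeterMatrix B) (cs : CoxeterSystem M W)
    (i j : B)
    (H : Type) [Ring H] [Algebra (LaurentPolynomial ℤ) H]
    (q : LaurentPolynomial ℤ) (hq : q = LaurentPolynomial.T 1)
    (T : Module.Basis W (LaurentPolynomial ℤ) H)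
    (hT1 : T 1 = 1)
    (hmul_gt : ∀ (b : B) (w : W), cs.length (cs.simple b * w) < cs.length w →
      T (cs.simple b) * T w = q • T (cs.simple b * w) + (q - 1) • T w)
    (Z : ℕ → H) (hZ : Z = Zel (T (cs.simple i)) (T (cs.simple j)))
    (n : ℕ) (hn : 1 ≤ n) :
    ∃ p : ℕ → Polynomial ℤ,
      ((List.range (2 * n)).map
          (fun k => if Even k then 1 + T (cs.simple i) else 1 + T (cs.simple j))).prod
        = ∑ k ∈ Finset.range (4 * n), (Polynomial.toLaurent (p k)) • Z k ∧
      (∀ k < 4 * n, (p k).degree < ((n - k / 4 : ℕ) : WithBot ℕ)) ∧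
      p (4 * n - 1) = 1 := by
  have quadratic (b : B) :
      T (cs.simple b) * T (cs.simple b) = q • 1 + (q - 1) • T (cs.simple b) := by
    simpa [hT1] using hmul_gt b (cs.simple b) (by simp)
  subst hq hZ
  rw [List.prod_range_map_ite_even_eq_pow]
  exact exists_pow_eq_sum_smul_Zel (quadratic i) (quadratic j) hn

/-- In the Hecke algebra of a dihedral Coxeter system with
`m(s,r) = m < ∞`, for every `n ≥ 1` the alternating product
`(1+T_s)(1+T_r)⋯` with `2n` factors equals `∑_{j=0}^{4n-1} p_{j,n} Z_j`,
where each `p_{j,n} ∈ ℤ[q]` has degree `< n - ⌊j/4⌋` and `p_{4n-1,n} = 1`. -/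
theorem stmt2
    (B W : Type) [Group W] (M : CoxeterMatrix B) (cs : CoxeterSystem M W)
    (i j : B) (hij : i ≠ j) (hdihedral : ∀ b : B, b = i ∨ b = j)
    (m : ℕ) (hm : M.M i j = m) (hmfin : 0 < m)
    (H : Type) [Ring H] [Algebra (LaurentPolynomial ℤ) H]
    (q : LaurentPolynomial ℤ) (hq : q = LaurentPolynomial.T 1)
    (T : Module.Basis W (LaurentPolynomial ℤ) H)
    (hT1 : T 1 = 1)
    (hmul_lt : ∀ (b : B) (w : W), cs.length w < cs.length (cs.simple b * w) →
      T (cs.simple b) * T w = T (cs.simple b * w))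
    (hmul_gt : ∀ (b : B) (w : W), cs.length (cs.simple b * w) < cs.length w →
      T (cs.simple b) * T w = q • T (cs.simple b * w) + (q - 1) • T w)
    (Z : ℕ → H) (hZ : Z = Zel (T (cs.simple i)) (T (cs.simple j)))
    (n : ℕ) (hn : 1 ≤ n) :
    ∃ p : ℕ → Polynomial ℤ,
      ((List.range (2 * n)).map
          (fun k => if Even k then 1 + T (cs.simple i) else 1 + T (cs.simple j))).prod
        = ∑ k ∈ Finset.range (4 * n), (Polynomial.toLaurent (p k)) • Z k ∧
      (∀ k < 4 * n, (p k).degree < ((n - k / 4 : ℕ) : WithBot ℕ)) ∧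
      p (4 * n - 1) = 1 :=
  stmt2_general B W M cs i j H q hq T hT1 hmul_gt Z hZ n hn
end

section
/- Let $R$ be a commutative ring, $R^s \subseteq R$ a subring, and $x_s \in R$ with $R = R^s \oplus x_s R^s$ as $R^s$-modules, $x_s^2 \in R^s$. Let $M, N$ be $(R,R)$-bimodules and $\theta_s M = R \otimes_{R^s} M$. Then the map $\mathfrak{F}$ sending an $(R,R)$-bimodule morphism $f : \theta_s M \to N$ to the map $m \mapsto x_s \otimes f(1 \otimes m) + 1 \otimes f(1 \otimes x_s m)$ is a bijection from $\mathrm{Hom}_{(R,R)}(\theta_s M, N)$ onto $\mathrm{Hom}_{(R,R)}(M, \theta_s N)$, with inverse sending $g$ to $\lambda \otimes m \mapsto \lambda\, g_2(m)$ where $g(m) = 1 \otimes g_1(m) + x_s \otimes g_2(m)$ is the unique decomposition. -/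
open scoped TensorProduct
open MulOpposite

/-!
Every element of `R ⊗[S] N` is uniquely `1 ⊗ n₁ + x ⊗ n₂`, and the `x`-component of `𝔉 f` at `m`
is `f (1 ⊗ m)`, which determines the `R`-linear map `f`. Conversely, if
`g m = 1 ⊗ g₁ m + x ⊗ g₂ m` is a bimodule map, comparing components in `g (s • m) = s • g m`
(`s ∈ S`) and `g (x • m) = x • g m` shows that `g₂` is `S`-linear with `g₂ (x • m) = g₁ m`;
so `λ ⊗ m ↦ λ • g₂ m` is well defined, and `𝔉` sends it back to `g`.
-/

section

variable {R : Type*} [CommRing R] {S : Subring R} {M : Type*} [AddCommGroup M] [Module R M]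

theorem Subring.mul_tmul_of_mem {s : R} (hs : s ∈ S) (p : R) (m : M) :
    (s * p) ⊗ₜ[S] m = p ⊗ₜ[S] (s • m) :=
  TensorProduct.smul_tmul (⟨s, hs⟩ : S) p m

theorem Subring.smul_tmul_of_mem {s : R} (hs : s ∈ S) (p : R) (m : M) :
    s • (p ⊗ₜ[S] m) = p ⊗ₜ[S] (s • m) := by
  rw [TensorProduct.smul_tmul', smul_eq_mul, mul_tmul_of_mem hs]

theorem exists_eq_one_tmul_add_tmul {x : R}
    (hdec : ∀ p : R, ∃ p₁ ∈ S, ∃ p₂ ∈ S, p = p₁ + x * p₂) (t : R ⊗[S] M) :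
    ∃ m₁ m₂ : M, t = (1 : R) ⊗ₜ m₁ + x ⊗ₜ m₂ := by
  induction t using TensorProduct.induction_on with
  | zero => exact ⟨0, 0, by simp⟩
  | tmul p m =>
    obtain ⟨p₁, hp₁, p₂, hp₂, rfl⟩ := hdec p
    refine ⟨p₁ • m, p₂ • m, ?_⟩
    rw [TensorProduct.add_tmul, ← Subring.mul_tmul_of_mem hp₁, mul_one, mul_comm,
      Subring.mul_tmul_of_mem hp₂]
  | add t t' ht ht' =>
    obtain ⟨m₁, m₂, rfl⟩ := ht
    obtain ⟨m₁', m₂', rfl⟩ := ht'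
    refine ⟨m₁ + m₁', m₂ + m₂', ?_⟩
    rw [TensorProduct.tmul_add, TensorProduct.tmul_add]
    abel

theorem one_tmul_add_tmul_inj {x : R}
    (huniq : ∀ m₁ m₂ : M, (1 : R) ⊗ₜ m₁ + x ⊗ₜ m₂ = (0 : R ⊗[S] M) → m₁ = 0 ∧ m₂ = 0)
    {m₁ m₂ m₁' m₂' : M}
    (h : (1 : R) ⊗ₜ[S] m₁ + x ⊗ₜ[S] m₂ = (1 : R) ⊗ₜ[S] m₁' + x ⊗ₜ[S] m₂') :
    m₁ = m₁' ∧ m₂ = m₂' := by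
  have h₀ : (1 : R) ⊗ₜ[S] (m₁ - m₁') + x ⊗ₜ[S] (m₂ - m₂') = 0 := by
    rw [TensorProduct.tmul_sub, TensorProduct.tmul_sub, sub_add_sub_comm, h, sub_self]
  obtain ⟨h₁, h₂⟩ := huniq _ _ h₀
  exact ⟨sub_eq_zero.mp h₁, sub_eq_zero.mp h₂⟩

theorem map_smul_of_decomp {P : Type*} [AddCommGroup P] [Module R P] {x : R}
    (hdec : ∀ p : R, ∃ p₁ ∈ S, ∃ p₂ ∈ S, p = p₁ + x * p₂) {g : M → P}
    (hadd : ∀ m m', g (m + m') = g m + g m') (hS : ∀ s ∈ S, ∀ m, g (s • m) = s • g m)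
    (hx : ∀ m, g (x • m) = x • g m) (r : R) (m : M) : g (r • m) = r • g m := by
  obtain ⟨r₁, hr₁, r₂, hr₂, rfl⟩ := hdec r
  rw [add_smul, hadd, mul_smul, hx, hS r₁ hr₁, hS r₂ hr₂, add_smul, mul_smul]

end

section

variable {R : Type*} [CommRing R] {S : Subring R} {M N : Type*}
  [AddCommGroup M] [Module R M] [AddCommGroup N] [Module R N]

theorem apply_tmul_eq_smul_apply_one_tmul {f : R ⊗[S] M → N}
    (hf : ∀ (r : R) t, f (r • t) = r • f t) (p : R) (m : M) :
    f (p ⊗ₜ m) = p • f ((1 : R) ⊗ₜ m) := by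
  rw [← hf, TensorProduct.smul_tmul', smul_eq_mul, mul_one]

theorem apply_one_tmul_smul_of_mem {f : R ⊗[S] M → N}
    (hf : ∀ (r : R) t, f (r • t) = r • f t) {s : R} (hs : s ∈ S) (m : M) :
    f ((1 : R) ⊗ₜ (s • m)) = s • f ((1 : R) ⊗ₜ m) := by
  rw [← Subring.mul_tmul_of_mem hs, apply_tmul_eq_smul_apply_one_tmul hf, mul_one]

theorem eq_of_apply_one_tmul_eq {f f' : R ⊗[S] M → N}
    (hadd : ∀ t t', f (t + t') = f t + f t') (hadd' : ∀ t t', f' (t + t') = f' t + f' t')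
    (hf : ∀ (r : R) t, f (r • t) = r • f t) (hf' : ∀ (r : R) t, f' (r • t) = r • f' t)
    (h : ∀ m : M, f ((1 : R) ⊗ₜ m) = f' ((1 : R) ⊗ₜ m)) : f = f' := by
  funext t
  induction t using TensorProduct.induction_on with
  | zero => rw [← zero_smul R (0 : R ⊗[S] M), hf, hf', zero_smul, zero_smul]
  | tmul p m =>
    rw [apply_tmul_eq_smul_apply_one_tmul hf, apply_tmul_eq_smul_apply_one_tmul hf', h]
  | add t t' ht ht' => rw [hadd, hadd', ht, ht']

variable (x : R)

/-- The map `𝔉`. -/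
def thetaAdjunct (f : R ⊗[S] M → N) (m : M) : R ⊗[S] N :=
  x ⊗ₜ f ((1 : R) ⊗ₜ m) + (1 : R) ⊗ₜ f ((1 : R) ⊗ₜ (x • m))

variable {x}

theorem thetaAdjunct_add {f : R ⊗[S] M → N} (hadd : ∀ t t', f (t + t') = f t + f t')
    (m m' : M) : thetaAdjunct x f (m + m') = thetaAdjunct x f m + thetaAdjunct x f m' := by
  simp only [thetaAdjunct, smul_add, TensorProduct.tmul_add, hadd]
  abel

theorem thetaAdjunct_smul_of_mem {f : R ⊗[S] M → N} (hf : ∀ (r : R) t, f (r • t) = r • f t) {s : R} (hs : s ∈ S) (m : M) :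
    thetaAdjunct x f (s • m) = s • thetaAdjunct x f m := by
  rw [thetaAdjunct, thetaAdjunct, smul_comm x s m, apply_one_tmul_smul_of_mem hf hs,
    apply_one_tmul_smul_of_mem hf hs, smul_add, Subring.smul_tmul_of_mem hs,
    Subring.smul_tmul_of_mem hs]

theorem thetaAdjunct_smul_self {f : R ⊗[S] M → N} (hf : ∀ (r : R) t, f (r • t) = r • f t)
    (hx2 : x * x ∈ S) (m : M) :
    thetaAdjunct (S := S) x f (x • m) = x • thetaAdjunct x f m := by
  rw [thetaAdjunct, thetaAdjunct, ← mul_smul, apply_one_tmul_smul_of_mem hf hx2,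
    ← Subring.mul_tmul_of_mem hx2, smul_add, TensorProduct.smul_tmul', TensorProduct.smul_tmul',
    smul_eq_mul, smul_eq_mul, mul_one, mul_one, add_comm]

theorem thetaAdjunct_apply_eq_one_tmul_add_tmul (f : R ⊗[S] M → N) (m : M) :
    thetaAdjunct x f m = (1 : R) ⊗ₜ f ((1 : R) ⊗ₜ (x • m)) + x ⊗ₜ f ((1 : R) ⊗ₜ m) :=
  add_comm _ _

theorem apply_one_tmul_eq_of_thetaAdjunct_eq
    (huniq : ∀ n₁ n₂ : N, (1 : R) ⊗ₜ n₁ + x ⊗ₜ n₂ = (0 : R ⊗[S] N) → n₁ = 0 ∧ n₂ = 0)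
    {f : R ⊗[S] M → N} {m : M} {n₁ n₂ : N}
    (h : thetaAdjunct x f m = (1 : R) ⊗ₜ n₁ + x ⊗ₜ n₂) : f ((1 : R) ⊗ₜ m) = n₂ :=
  (one_tmul_add_tmul_inj huniq ((thetaAdjunct_apply_eq_one_tmul_add_tmul f m).symm.trans h)).2

theorem thetaAdjunct_liftBaseChange (l : M →ₗ[S] N) (m : M) :
    thetaAdjunct x (l.liftBaseChange R) m = (1 : R) ⊗ₜ l (x • m) + x ⊗ₜ l m := by
  rw [thetaAdjunct_apply_eq_one_tmul_add_tmul, LinearMap.liftBaseChange_tmul,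
    LinearMap.liftBaseChange_tmul, one_smul, one_smul]

end

section

variable {R : Type*} [CommRing R] {S : Subring R} {x : R} {M N : Type*}
  [AddCommGroup N] [Module R N] {g : M → R ⊗[S] N} {g₁ g₂ : M → N}

theorem snd_add_of_eq_one_tmul_add_tmul [AddCommGroup M]
    (huniq : ∀ n₁ n₂ : N, (1 : R) ⊗ₜ n₁ + x ⊗ₜ n₂ = (0 : R ⊗[S] N) → n₁ = 0 ∧ n₂ = 0)
    (hg : ∀ m, g m = (1 : R) ⊗ₜ g₁ m + x ⊗ₜ g₂ m) (hadd : ∀ m m', g (m + m') = g m + g m')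
    (m m' : M) : g₂ (m + m') = g₂ m + g₂ m' := by
  refine (one_tmul_add_tmul_inj huniq (m₁ := g₁ (m + m')) (m₁' := g₁ m + g₁ m') ?_).2
  rw [← hg, hadd, hg, hg, TensorProduct.tmul_add, TensorProduct.tmul_add]
  abel

theorem snd_smul_of_mem_of_eq_one_tmul_add_tmul [AddCommGroup M] [Module R M]
    (huniq : ∀ n₁ n₂ : N, (1 : R) ⊗ₜ n₁ + x ⊗ₜ n₂ = (0 : R ⊗[S] N) → n₁ = 0 ∧ n₂ = 0)
    (hg : ∀ m, g m = (1 : R) ⊗ₜ g₁ m + x ⊗ₜ g₂ m) (hsmul : ∀ (r : R) m, g (r • m) = r • g m)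
    {s : R} (hs : s ∈ S) (m : M) : g₂ (s • m) = s • g₂ m := by
  refine (one_tmul_add_tmul_inj huniq (m₁ := g₁ (s • m)) (m₁' := s • g₁ m) ?_).2
  rw [← hg, hsmul, hg, smul_add, Subring.smul_tmul_of_mem hs, Subring.smul_tmul_of_mem hs]

theorem snd_smul_self_of_eq_one_tmul_add_tmul [AddCommGroup M] [Module R M]
    (huniq : ∀ n₁ n₂ : N, (1 : R) ⊗ₜ n₁ + x ⊗ₜ n₂ = (0 : R ⊗[S] N) → n₁ = 0 ∧ n₂ = 0)
    (hg : ∀ m, g m = (1 : R) ⊗ₜ g₁ m + x ⊗ₜ g₂ m) (hsmul : ∀ (r : R) m, g (r • m) = r • g m)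
    (hx2 : x * x ∈ S) (m : M) : g₂ (x • m) = g₁ m := by
  refine (one_tmul_add_tmul_inj huniq (m₁ := g₁ (x • m)) (m₁' := (x * x) • g₂ m) ?_).2
  rw [← hg, hsmul, hg, smul_add, TensorProduct.smul_tmul', TensorProduct.smul_tmul',
    smul_eq_mul, smul_eq_mul, mul_one, ← Subring.mul_tmul_of_mem hx2, mul_one, add_comm]

theorem snd_eq_of_eq_one_tmul_add_tmul
    (huniq : ∀ n₁ n₂ : N, (1 : R) ⊗ₜ n₁ + x ⊗ₜ n₂ = (0 : R ⊗[S] N) → n₁ = 0 ∧ n₂ = 0)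
    (hg : ∀ m, g m = (1 : R) ⊗ₜ g₁ m + x ⊗ₜ g₂ m) {ρ : R ⊗[S] N → R ⊗[S] N} {φ : N → N}
    (hρadd : ∀ t t', ρ (t + t') = ρ t + ρ t') (hρ : ∀ (p : R) n, ρ (p ⊗ₜ n) = p ⊗ₜ φ n)
    {m m' : M} (h : g m' = ρ (g m)) : g₂ m' = φ (g₂ m) := by
  refine (one_tmul_add_tmul_inj huniq (m₁ := g₁ m') (m₁' := φ (g₁ m)) ?_).2
  rw [← hg, h, hg, hρadd, hρ, hρ]

end

theorem stmt6_general
    (R : Type) [CommRing R] (S : Subring R) (x : R)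
    (hdec : ∀ p : R, ∃ p₁ ∈ S, ∃ p₂ ∈ S, p = p₁ + x * p₂)
    (hx2 : x * x ∈ S)
    (M N : Type) [AddCommGroup M] [Module R M] [Module Rᵐᵒᵖ M]
    [SMulCommClass R Rᵐᵒᵖ M]
    [AddCommGroup N] [Module R N] [Module Rᵐᵒᵖ N] [SMulCommClass R Rᵐᵒᵖ N]
    (huniq : ∀ n₁ n₂ : N, (1 : R) ⊗ₜ n₁ + x ⊗ₜ n₂ = (0 : R ⊗[S] N) → n₁ = 0 ∧ n₂ = 0)
    (ρ : R → R ⊗[S] N → R ⊗[S] N)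
    (hρadd : ∀ r (t t' : R ⊗[S] N), ρ r (t + t') = ρ r t + ρ r t')
    (hρ : ∀ (r p : R) (n : N), ρ r (p ⊗ₜ n) = p ⊗ₜ (op r • n))
    (Φ : (R ⊗[S] M → N) → (M → R ⊗[S] N))
    (hΦ : ∀ f m, Φ f m = x ⊗ₜ f ((1 : R) ⊗ₜ m) + (1 : R) ⊗ₜ f ((1 : R) ⊗ₜ (x • m))) :
    Set.BijOn Φ
      {f : R ⊗[S] M → N |
        (∀ t t', f (t + t') = f t + f t') ∧
        (∀ (r : R) t, f (r • t) = r • f t) ∧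
        (∀ (r p : R) (m : M), f (p ⊗ₜ (op r • m)) = op r • f (p ⊗ₜ m))}
      {g : M → R ⊗[S] N |
        (∀ m m', g (m + m') = g m + g m') ∧
        (∀ (r : R) (m : M), g (r • m) = r • g m) ∧
        (∀ (r : R) (m : M), g (op r • m) = ρ r (g m))} ∧
    (∀ g : M → R ⊗[S] N,
      (∀ m m', g (m + m') = g m + g m') →
      ∀ g₁ g₂ : M → N, (∀ m, g m = (1 : R) ⊗ₜ g₁ m + x ⊗ₜ g₂ m) →
      ∀ f : R ⊗[S] M → N,
        ((∀ t t', f (t + t') = f t + f t') ∧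
         (∀ (r : R) t, f (r • t) = r • f t) ∧
         (∀ (r p : R) (m : M), f (p ⊗ₜ (op r • m)) = op r • f (p ⊗ₜ m))) →
        Φ f = g → ∀ (lam : R) (m : M), f (lam ⊗ₜ m) = lam • g₂ m) := by
  obtain rfl : Φ = thetaAdjunct x := funext fun f => funext (hΦ f)
  refine ⟨⟨?_, ?_, ?_⟩, ?_⟩
  · rintro f ⟨hadd, hf, hfop⟩
    refine ⟨thetaAdjunct_add hadd, map_smul_of_decomp hdec (thetaAdjunct_add hadd)
      (fun s hs => thetaAdjunct_smul_of_mem hf hs) (thetaAdjunct_smul_self hf hx2), fun r m => ?_⟩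
    rw [thetaAdjunct, thetaAdjunct, hρadd, hρ, hρ, hfop, smul_comm x (op r) m, hfop]
  · rintro f ⟨hadd, hf, -⟩ f' ⟨hadd', hf', -⟩ h
    refine eq_of_apply_one_tmul_eq hadd hadd' hf hf' fun m => ?_
    exact apply_one_tmul_eq_of_thetaAdjunct_eq huniq
      ((congrFun h m).trans (thetaAdjunct_apply_eq_one_tmul_add_tmul f' m))
  · rintro g ⟨hadd, hsmul, hgop⟩
    choose g₁ g₂ hg using fun m => exists_eq_one_tmul_add_tmul hdec (g m)
    let l : M →ₗ[S] N :=
      { toFun := g₂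
        map_add' := snd_add_of_eq_one_tmul_add_tmul huniq hg hadd
        map_smul' := fun s => snd_smul_of_mem_of_eq_one_tmul_add_tmul huniq hg hsmul s.2 }
    refine ⟨l.liftBaseChange R, ⟨map_add _, map_smul _, fun r p m => ?_⟩, funext fun m => ?_⟩
    · rw [LinearMap.liftBaseChange_tmul, LinearMap.liftBaseChange_tmul, LinearMap.coe_mk,
        AddHom.coe_mk, snd_eq_of_eq_one_tmul_add_tmul huniq hg (hρadd r) (hρ r) (hgop r m),
        smul_comm]
    · rw [thetaAdjunct_liftBaseChange, LinearMap.coe_mk, AddHom.coe_mk,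
        snd_smul_self_of_eq_one_tmul_add_tmul huniq hg hsmul hx2, hg]
  · rintro g - g₁ g₂ hg f ⟨-, hf, -⟩ rfl lam m
    rw [apply_tmul_eq_smul_apply_one_tmul hf, apply_one_tmul_eq_of_thetaAdjunct_eq huniq (hg m)]

/-- `R = S ⊕ xS` with `x² ∈ S`; `M, N` are `(R,R)`-bimodules
(left `R`-action, right action encoded as a left `Rᵐᵒᵖ`-action commuting with
the left one) and `θₛM = R ⊗_S M`.  The map `𝔉` sending a bimodule morphism
`f : θₛM → N` to `m ↦ x ⊗ f(1 ⊗ m) + 1 ⊗ f(1 ⊗ x m)` is a bijection from the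
set of bimodule morphisms `θₛM → N` onto the set of bimodule morphisms
`M → θₛN`; its inverse sends `g` to `λ ⊗ m ↦ λ g₂(m)`, where
`g(m) = 1 ⊗ g₁(m) + x ⊗ g₂(m)` is the unique decomposition.
(`ρ r` is right multiplication by `r` on the second factor of `θₛN`.) -/
theorem stmt6
    (R : Type) [CommRing R] (S : Subring R) (x : R)
    (hdec : ∀ p : R, ∃ p₁ ∈ S, ∃ p₂ ∈ S, p = p₁ + x * p₂)
    (huniqR : ∀ p₁ p₂ : R, p₁ ∈ S → p₂ ∈ S → p₁ + x * p₂ = 0 → p₁ = 0 ∧ p₂ = 0)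
    (hx2 : x * x ∈ S)
    (M N : Type) [AddCommGroup M] [Module R M] [Module Rᵐᵒᵖ M]
    [SMulCommClass R Rᵐᵒᵖ M]
    [AddCommGroup N] [Module R N] [Module Rᵐᵒᵖ N] [SMulCommClass R Rᵐᵒᵖ N]
    (huniq : ∀ n₁ n₂ : N, (1 : R) ⊗ₜ n₁ + x ⊗ₜ n₂ = (0 : R ⊗[S] N) → n₁ = 0 ∧ n₂ = 0)
    (ρ : R → R ⊗[S] N → R ⊗[S] N)
    (hρadd : ∀ r (t t' : R ⊗[S] N), ρ r (t + t') = ρ r t + ρ r t')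
    (hρ : ∀ (r p : R) (n : N), ρ r (p ⊗ₜ n) = p ⊗ₜ (op r • n))
    (Φ : (R ⊗[S] M → N) → (M → R ⊗[S] N))
    (hΦ : ∀ f m, Φ f m = x ⊗ₜ f ((1 : R) ⊗ₜ m) + (1 : R) ⊗ₜ f ((1 : R) ⊗ₜ (x • m))) :
    Set.BijOn Φ
      {f : R ⊗[S] M → N |
        (∀ t t', f (t + t') = f t + f t') ∧
        (∀ (r : R) t, f (r • t) = r • f t) ∧
        (∀ (r p : R) (m : M), f (p ⊗ₜ (op r • m)) = op r • f (p ⊗ₜ m))}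
      {g : M → R ⊗[S] N |
        (∀ m m', g (m + m') = g m + g m') ∧
        (∀ (r : R) (m : M), g (r • m) = r • g m) ∧
        (∀ (r : R) (m : M), g (op r • m) = ρ r (g m))} ∧
    (∀ g : M → R ⊗[S] N,
      (∀ m m', g (m + m') = g m + g m') →
      ∀ g₁ g₂ : M → N, (∀ m, g m = (1 : R) ⊗ₜ g₁ m + x ⊗ₜ g₂ m) →
      ∀ f : R ⊗[S] M → N,
        ((∀ t t', f (t + t') = f t + f t') ∧
         (∀ (r : R) t, f (r • t) = r • f t) ∧
         (∀ (r p : R) (m : M), f (p ⊗ₜ (op r • m)) = op r • f (p ⊗ₜ m))) →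
        Φ f = g → ∀ (lam : R) (m : M), f (lam ⊗ₜ m) = lam • g₂ m) :=
  stmt6_general R S x hdec hx2 M N huniq ρ hρadd hρ Φ hΦ
end

section
/- Let $R$ be a commutative ring and $R^{s_1}, \ldots, R^{s_n}$ subrings with elements $x_{s_i} \in R$ such that $R = R^{s_i} \oplus x_{s_i} R^{s_i}$ as left $R^{s_i}$-modules for each $i$. Then the iterated tensor product $\theta_{s_1} \cdots \theta_{s_n} = R \otimes_{R^{s_1}} R \otimes_{R^{s_2}} \cdots \otimes_{R^{s_n}} R$ is a free left $R$-module with basis $\{1 \otimes x_{s_1}^{i_1} \otimes \cdots \otimes x_{s_n}^{i_n}\}_{(i_1,\ldots,i_n) \in \{0,1\}^n}$, where $x_s^0 = 1$ and $x_s^1 = x_s$. -/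
open scoped TensorProduct

/-- A bundled `R`-module. -/
structure PMod (R : Type) [CommRing R] : Type 1 where
  carrier : Type
  [acg : AddCommGroup carrier]
  [mod : Module R carrier]

attribute [instance] PMod.acg PMod.mod

/-- The iterated tensor product `R ⊗_{S₁} R ⊗_{S₂} ⋯ ⊗_{Sₙ} R` (with `n + 1`
factors of `R`), as a left `R`-module via the leftmost factor. -/
noncomputable def Theta (R : Type) [CommRing R] : List (Subring R) → PMod R
  | [] => { carrier := R }
  | S :: L => { carrier := TensorProduct S R (Theta R L).carrier }

/-- The candidate basis element `1 ⊗ x₁^{i₁} ⊗ ⋯ ⊗ xₙ^{iₙ}` of the iterated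
tensor product, for a list of pairs (subring, element) and a list of boolean
exponents. -/
noncomputable def elt (R : Type) [CommRing R] :
    (L : List (Subring R × R)) → List Bool → (Theta R (L.map Prod.fst)).carrier
  | [], _ => (1 : R)
  | p :: L', c => (1 : R) ⊗ₜ ((if c.headI then p.2 else 1) • elt R L' c.tail)

/-! Induction on the list. If `M` is a free `R`-module with basis `B` and `{1, x}` is an
`S`-basis of `R`, then `M` is a free `S`-module with basis `{B j, x • B j}`, so base change
makes `R ⊗[S] M` a free `R`-module with basis `{1 ⊗ B j, 1 ⊗ x • B j}`. -/

namespace Subring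

variable {R : Type*} [CommRing R] (S : Subring R) (x : R)

theorem linearIndependent_ite_one
    (huniq : ∀ p₁ p₂ : R, p₁ ∈ S → p₂ ∈ S → p₁ + x * p₂ = 0 → p₁ = 0 ∧ p₂ = 0) :
    LinearIndependent S (fun b : Bool => if b then x else 1) := by
  rw [Fintype.linearIndependent_iff]
  intro g hg
  have hsum : (g false : R) + x * (g true : R) = 0 := by
    simpa [Fintype.sum_bool, Subring.smul_def, mul_comm, add_comm] using hg
  obtain ⟨h₁, h₂⟩ := huniq _ _ (g false).2 (g true).2 hsum
  rintro (_ | _)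
  exacts [Subtype.ext h₁, Subtype.ext h₂]

theorem top_le_span_ite_one (hdec : ∀ p : R, ∃ p₁ ∈ S, ∃ p₂ ∈ S, p = p₁ + x * p₂) :
    ⊤ ≤ Submodule.span S (Set.range fun b : Bool => if b then x else 1) := by
  rintro r -
  obtain ⟨p₁, h₁, p₂, h₂, rfl⟩ := hdec r
  have hr : p₁ + x * p₂ = (⟨p₁, h₁⟩ : S) • (1 : R) + (⟨p₂, h₂⟩ : S) • x := by
    simp [Subring.smul_def, mul_comm]
  rw [hr]
  exact add_mem (Submodule.smul_mem _ _ (Submodule.subset_span ⟨false, rfl⟩))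
    (Submodule.smul_mem _ _ (Submodule.subset_span ⟨true, rfl⟩))

noncomputable def basisOneX (hdec : ∀ p : R, ∃ p₁ ∈ S, ∃ p₂ ∈ S, p = p₁ + x * p₂)
    (huniq : ∀ p₁ p₂ : R, p₁ ∈ S → p₂ ∈ S → p₁ + x * p₂ = 0 → p₁ = 0 ∧ p₂ = 0) :
    Module.Basis Bool S R :=
  .mk (linearIndependent_ite_one S x huniq) (top_le_span_ite_one S x hdec)

@[simp]
theorem basisOneX_apply (hdec : ∀ p : R, ∃ p₁ ∈ S, ∃ p₂ ∈ S, p = p₁ + x * p₂)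
    (huniq : ∀ p₁ p₂ : R, p₁ ∈ S → p₂ ∈ S → p₁ + x * p₂ = 0 → p₁ = 0 ∧ p₂ = 0) (b : Bool) :
    basisOneX S x hdec huniq b = if b then x else 1 :=
  Module.Basis.mk_apply ..

end Subring

theorem elt_cons_ofFn (R : Type) [CommRing R] (p : Subring R × R) (L : List (Subring R × R))
    (f : Fin (L.length + 1) → Bool) :
    elt R (p :: L) (List.ofFn f) =
      (1 : R) ⊗ₜ[p.1] ((if f 0 then p.2 else 1) • elt R L (List.ofFn fun i => f i.succ)) := by
  simp only [elt, List.ofFn_succ, List.headI_cons, List.tail_cons]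
  rfl

theorem exists_basis_theta_nil (R : Type) [CommRing R] :
    ∃ B : Module.Basis (Fin 0 → Bool) R (Theta R []).carrier,
      ∀ f, B f = elt R [] (List.ofFn f) :=
  ⟨Module.Basis.singleton _ R, fun f => (Module.Basis.singleton_apply _ R f :)⟩

theorem exists_basis_theta_cons (R : Type) [CommRing R] (p : Subring R × R)
    (L : List (Subring R × R)) (C : Module.Basis Bool p.1 R)
    (hC : ∀ b, C b = if b then p.2 else 1)
    (B : Module.Basis (Fin L.length → Bool) R (Theta R (L.map Prod.fst)).carrier)
    (hB : ∀ f, B f = elt R L (List.ofFn f)) :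
    ∃ B' : Module.Basis (Fin (p :: L).length → Bool) R (Theta R ((p :: L).map Prod.fst)).carrier,
      ∀ f, B' f = elt R (p :: L) (List.ofFn f) := by
  let B' : Module.Basis (Fin (L.length + 1) → Bool) R
      (R ⊗[p.1] (Theta R (L.map Prod.fst)).carrier) :=
    ((C.smulTower B).baseChange R).reindex (Fin.consEquiv fun _ => Bool)
  refine ⟨B', fun f => ?_⟩
  have hB' : B' f = (1 : R) ⊗ₜ[p.1] (C (f 0) • B fun i => f i.succ) := by
    rw [Module.Basis.reindex_apply, Module.Basis.baseChange_apply, Module.Basis.smulTower_apply]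
    rfl
  rw [elt_cons_ofFn, ← hB, ← hC]
  exact hB'

/-- If `R = Sᵢ ⊕ xᵢSᵢ` as `Sᵢ`-modules for each `i`, then
`R ⊗_{S₁} R ⊗ ⋯ ⊗_{Sₙ} R` is a free left `R`-module with basis
`{1 ⊗ x₁^{i₁} ⊗ ⋯ ⊗ xₙ^{iₙ}}` over all `(i₁,…,iₙ) ∈ {0,1}ⁿ`. -/
theorem stmt11
    (R : Type) [CommRing R] (L : List (Subring R × R))
    (hdec : ∀ sx ∈ L, ∀ p : R, ∃ p₁ ∈ sx.1, ∃ p₂ ∈ sx.1, p = p₁ + sx.2 * p₂)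
    (huniq : ∀ sx ∈ L, ∀ p₁ p₂ : R, p₁ ∈ sx.1 → p₂ ∈ sx.1 →
      p₁ + sx.2 * p₂ = 0 → p₁ = 0 ∧ p₂ = 0) :
    ∃ Bs : Module.Basis (Fin L.length → Bool) R (Theta R (L.map Prod.fst)).carrier,
      ∀ f, Bs f = elt R L (List.ofFn f) := by
  induction L with
  | nil => exact exists_basis_theta_nil R
  | cons p L ih =>
    obtain ⟨B, hB⟩ := ih (fun sx h => hdec sx (List.mem_cons_of_mem _ h))
      (fun sx h => huniq sx (List.mem_cons_of_mem _ h))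
    have hdec_p := hdec p List.mem_cons_self
    have huniq_p := huniq p List.mem_cons_self
    exact exists_basis_theta_cons R p L (p.1.basisOneX p.2 hdec_p huniq_p)
      (Subring.basisOneX_apply _ _ hdec_p huniq_p) B hB
end

section
/- Let $(W,S)$ be a Coxeter system and $s_1, \ldots, s_n \in S$. Writing $(1+T_{s_1})\cdots(1+T_{s_n}) = \sum_{x\in W} p^x_n T_x$ in the Hecke algebra over $\mathbb{Z}[q,q^{-1}]$, every $p^x_n$ is a polynomial in $q$ with non-negative integer coefficients. -/
/-!
Since `T_s T_w` is either `T_{sw}` or `q T_{sw} + (q - 1) T_w`, the product `(1 + T_s) T_w` is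
either `T_w + T_{sw}` or `q (T_{sw} + T_w)`: the `-1` cancels. So left multiplication by
`1 + T_s` preserves the elements whose coordinates lie in any subsemiring containing `q`,
such as `ℕ[q]`, and so does the whole product starting from `1 = T_1`.
-/

namespace Module.Basis

variable {ι R H : Type*} [CommSemiring R] [Semiring H] [Algebra R H]

def coordSubmonoid (T : Basis ι R H) (S : Subsemiring R) : AddSubmonoid H where
  carrier := {h | ∀ i, T.repr h i ∈ S}
  add_mem' {a b} ha hb i := by simpa using S.add_mem (ha i) (hb i)
  zero_mem' i := by simp

variable {T : Basis ι R H} {S : Subsemiring R}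

theorem self_mem_coordSubmonoid (i : ι) : T i ∈ T.coordSubmonoid S := fun j => by
  classical
  rw [T.repr_self, Finsupp.single_apply]
  split_ifs
  exacts [S.one_mem, S.zero_mem]

theorem smul_mem_coordSubmonoid {c : R} {h : H} (hc : c ∈ S) (hh : h ∈ T.coordSubmonoid S) :
    c • h ∈ T.coordSubmonoid S := fun i => by
  simpa using S.mul_mem hc (hh i)

theorem mul_mem_coordSubmonoid {a h : H} (ha : ∀ i, a * T i ∈ T.coordSubmonoid S)
    (hh : h ∈ T.coordSubmonoid S) : a * h ∈ T.coordSubmonoid S := by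
  rw [← T.linearCombination_repr h, Finsupp.linearCombination_apply, Finsupp.sum, Finset.mul_sum]
  exact AddSubmonoid.sum_mem _ fun i _ => by
    rw [mul_smul_comm]
    exact smul_mem_coordSubmonoid (hh i) (ha i)

end Module.Basis

section Hecke

open Module.Basis

variable {B W R H : Type*} [Group W] {M : CoxeterMatrix B} [CommRing R] [Ring H] [Algebra R H]

theorem one_add_mul_mem_coordSubmonoid (cs : CoxeterSystem M W) (T : Module.Basis W R H)
    {q : R} {S : Subsemiring R} (hqS : q ∈ S)
    (hmul_lt : ∀ (i : B) (w : W), cs.length w < cs.length (cs.simple i * w) →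
      T (cs.simple i) * T w = T (cs.simple i * w))
    (hmul_gt : ∀ (i : B) (w : W), cs.length (cs.simple i * w) < cs.length w →
      T (cs.simple i) * T w = q • T (cs.simple i * w) + (q - 1) • T w)
    (i : B) {h : H} (hh : h ∈ T.coordSubmonoid S) :
    (1 + T (cs.simple i)) * h ∈ T.coordSubmonoid S := by
  refine mul_mem_coordSubmonoid (fun w => ?_) hh
  rw [add_mul, one_mul]
  rcases cs.length_simple_mul w i with hlen | hlen
  · rw [hmul_lt i w (by omega)]
    exact add_mem (self_mem_coordSubmonoid w) (self_mem_coordSubmonoid _)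
  · rw [hmul_gt i w (by omega), show T w + (q • T (cs.simple i * w) + (q - 1) • T w) =
      q • T (cs.simple i * w) + q • T w by module]
    exact add_mem (smul_mem_coordSubmonoid hqS (self_mem_coordSubmonoid _))
      (smul_mem_coordSubmonoid hqS (self_mem_coordSubmonoid w))

theorem prod_one_add_mem_coordSubmonoid (cs : CoxeterSystem M W) (T : Module.Basis W R H)
    (hT1 : T 1 = 1) {q : R} {S : Subsemiring R} (hqS : q ∈ S)
    (hmul_lt : ∀ (i : B) (w : W), cs.length w < cs.length (cs.simple i * w) →
      T (cs.simple i) * T w = T (cs.simple i * w))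
    (hmul_gt : ∀ (i : B) (w : W), cs.length (cs.simple i * w) < cs.length w →
      T (cs.simple i) * T w = q • T (cs.simple i * w) + (q - 1) • T w)
    (l : List B) : (l.map fun i => 1 + T (cs.simple i)).prod ∈ T.coordSubmonoid S := by
  induction l with
  | nil => simpa [hT1] using self_mem_coordSubmonoid (S := S) (T := T) 1
  | cons i l ih =>
    rw [List.map_cons, List.prod_cons]
    exact one_add_mul_mem_coordSubmonoid cs T hqS hmul_lt hmul_gt i ih

end Hecke

/-- Writing `(1+T_{s_1})⋯(1+T_{s_n}) = ∑ₓ pⁿₓ Tₓ` in the Hecke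
algebra over `ℤ[q,q⁻¹]`, every coefficient `pⁿₓ` is a polynomial in `q` with
non-negative integer coefficients. -/
theorem stmt13
    (B W : Type) [Group W] (M : CoxeterMatrix B) (cs : CoxeterSystem M W)
    (H : Type) [Ring H] [Algebra (LaurentPolynomial ℤ) H]
    (q : LaurentPolynomial ℤ) (hq : q = LaurentPolynomial.T 1)
    (T : Module.Basis W (LaurentPolynomial ℤ) H)
    (hT1 : T 1 = 1)
    (hmul_lt : ∀ (i : B) (w : W), cs.length w < cs.length (cs.simple i * w) →
      T (cs.simple i) * T w = T (cs.simple i * w))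
    (hmul_gt : ∀ (i : B) (w : W), cs.length (cs.simple i * w) < cs.length w →
      T (cs.simple i) * T w = q • T (cs.simple i * w) + (q - 1) • T w)
    (n : ℕ) (s : Fin n → B) (x : W) :
    ∃ P : Polynomial ℤ, (∀ k, 0 ≤ P.coeff k) ∧
      T.repr (((List.ofFn s).map (fun i => 1 + T (cs.simple i))).prod) x
        = Polynomial.toLaurent P := by
  let S : Subsemiring (LaurentPolynomial ℤ) :=
    (Polynomial.toLaurent.comp (Polynomial.mapRingHom (Nat.castRingHom ℤ))).rangeS
  have hqS : q ∈ S := ⟨Polynomial.X, by simp [hq]⟩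
  obtain ⟨p, hp⟩ :=
    prod_one_add_mem_coordSubmonoid cs T hT1 hqS hmul_lt hmul_gt (List.ofFn s) x
  exact ⟨p.map (Nat.castRingHom ℤ), fun k => by simp, hp.symm⟩
end
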